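/- arXiv:2507.16345 — 5 statements merged into one kernel-verified Lean document; each statement's English description precedes it below -/
import Mathlib

section
/- Let r and m be positive integers and let X_1, …, X_r be independent random vectors in ℝ^m, each with i.i.d. standard normal N(0,1) coordinates. Then with probability at least 1 − 2·exp(−r/2), for every sign vector s ∈ {−1,1}^r it holds that ‖Σ_{i=1}^r s_i X_i‖_2 ≤ 2r + √(r·m). -/
set_option maxHeartbeats 1000000

open MeasureTheory ProbabilityTheory Real ENNReal

lemma sgss_lintegral_pi_prod {k : ℕ} {α : Type*} [MeasurableSpace α] (μ0 : Measure α)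
    [SigmaFinite μ0] (f : Fin k → α → ℝ≥0∞) (hf : ∀ i, Measurable (f i)) :
    ∫⁻ x, ∏ i, f i (x i) ∂(Measure.pi fun _ : Fin k => μ0) = ∏ i, ∫⁻ a, f i a ∂μ0 := by
  induction k with
  | zero => simp [Measure.pi_of_empty]
  | succ n ih =>
    have hmp := measurePreserving_piFinSuccAbove (fun _ : Fin (n+1) => μ0) 0
    have hg : Measurable (fun p : α × (Fin n → α) => f 0 p.1 * ∏ j : Fin n, f j.succ (p.2 j)) := by
      apply Measurable.mul
      · exact (hf 0).comp measurable_fst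
      · exact Finset.measurable_prod _ fun j _ =>
          (hf j.succ).comp ((measurable_pi_apply j).comp measurable_snd)
    have h2 := hmp.lintegral_comp hg
    have h1 : ∀ x : Fin (n+1) → α, (∏ i, f i (x i)) =
        f 0 ((MeasurableEquiv.piFinSuccAbove (fun _ => α) 0 x).1) *
          ∏ j : Fin n, f j.succ ((MeasurableEquiv.piFinSuccAbove (fun _ => α) 0 x).2 j) := by
      intro x
      rw [Fin.prod_univ_succ]
      congr 1
    rw [lintegral_congr h1]
    have hprodmeas : AEMeasurable (fun y : Fin n → α => ∏ j : Fin n, f j.succ (y j))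
        (Measure.pi fun _ : Fin n => μ0) :=
      (Finset.measurable_prod _ fun j _ => (hf j.succ).comp (measurable_pi_apply j)).aemeasurable
    have ih' := ih (fun j => f j.succ) (fun j => hf j.succ)
    rw [h2, lintegral_prod_mul (hf 0).aemeasurable hprodmeas, ih', Fin.prod_univ_succ]

lemma sgss_pdf_one (x : ℝ) : gaussianPDFReal 0 1 x = (√(2 * π))⁻¹ * rexp (-x ^ 2 / 2) := by
  simp [gaussianPDFReal]

lemma sgss_G1_int (b : ℝ) : ∫ x, rexp (b * x) * gaussianPDFReal 0 1 x = rexp (b ^ 2 / 2) := by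
  have key : ∀ x : ℝ, rexp (b * x) * gaussianPDFReal 0 1 x
      = (√(2 * π))⁻¹ * rexp (b ^ 2 / 2) * rexp (-(1/2 : ℝ) * (x - b) ^ 2) := by
    intro x
    rw [sgss_pdf_one]
    rw [mul_comm (rexp (b*x)), mul_assoc, ← Real.exp_add, mul_assoc, ← Real.exp_add]
    congr 2
    ring
  simp_rw [key]
  rw [integral_const_mul]
  rw [show (fun x => rexp (-(1/2:ℝ) * (x - b)^2)) = fun x => (fun y => rexp (-(1/2:ℝ) * y^2)) (x - b) from rfl]
  rw [integral_sub_right_eq_self (fun y => rexp (-(1/2:ℝ) * y^2)) b]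
  rw [integral_gaussian]
  rw [show π / (1/2 : ℝ) = 2 * π by ring]
  have h2π : √(2 * π) ≠ 0 := by positivity
  field_simp

lemma sgss_G1_integrable (b : ℝ) :
    Integrable (fun x => rexp (b * x) * gaussianPDFReal 0 1 x) := by
  have key : ∀ x : ℝ, rexp (b * x) * gaussianPDFReal 0 1 x
      = (√(2 * π))⁻¹ * rexp (b ^ 2 / 2) * rexp (-(1/2 : ℝ) * (x - b) ^ 2) := by
    intro x
    rw [sgss_pdf_one]
    rw [mul_comm (rexp (b*x)), mul_assoc, ← Real.exp_add, mul_assoc, ← Real.exp_add]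
    congr 2
    ring
  simp_rw [key]
  exact ((integrable_exp_neg_mul_sq (by norm_num : (0:ℝ) < 1/2)).comp_sub_right b).const_mul _

lemma sgss_G2_int {c : ℝ} (hc : c < 1/2) :
    ∫ x, rexp (c * x ^ 2) * gaussianPDFReal 0 1 x = (√(1 - 2 * c))⁻¹ := by
  have hpos : (0:ℝ) < 1/2 - c := by linarith
  have key : ∀ x : ℝ, rexp (c * x ^ 2) * gaussianPDFReal 0 1 x
      = (√(2 * π))⁻¹ * rexp (-(1/2 - c) * x ^ 2) := by
    intro x
    rw [sgss_pdf_one, mul_comm (rexp (c*x^2)), mul_assoc, ← Real.exp_add]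
    congr 2
    ring
  simp_rw [key]
  rw [integral_const_mul, integral_gaussian]
  rw [show π / (1/2 - c) = (2 * π) / (1 - 2*c) by field_simp]
  have h2π : (0:ℝ) < 2 * π := by positivity
  rw [Real.sqrt_div h2π.le]
  rw [eq_comm, inv_eq_iff_eq_inv]
  field_simp

lemma sgss_G2_integrable {c : ℝ} (hc : c < 1/2) :
    Integrable (fun x => rexp (c * x ^ 2) * gaussianPDFReal 0 1 x) := by
  have hpos : (0:ℝ) < 1/2 - c := by linarith
  have key : ∀ x : ℝ, rexp (c * x ^ 2) * gaussianPDFReal 0 1 x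
      = (√(2 * π))⁻¹ * rexp (-(1/2 - c) * x ^ 2) := by
    intro x
    rw [sgss_pdf_one, mul_comm (rexp (c*x^2)), mul_assoc, ← Real.exp_add]
    congr 2
    ring
  simp_rw [key]
  exact (integrable_exp_neg_mul_sq hpos).const_mul _

lemma sgss_lintegral_gauss (f : ℝ → ℝ) (hf : Measurable f) (hnn : ∀ x, 0 ≤ f x)
    (hi : Integrable (fun x => f x * gaussianPDFReal 0 1 x)) :
    ∫⁻ x, ENNReal.ofReal (f x) ∂(gaussianReal 0 1) =
      ENNReal.ofReal (∫ x, f x * gaussianPDFReal 0 1 x) := by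
  rw [gaussianReal_of_var_ne_zero _ one_ne_zero,
    lintegral_withDensity_eq_lintegral_mul _ (measurable_gaussianPDF 0 1)
      (hf.ennreal_ofReal)]
  rw [ofReal_integral_eq_lintegral_ofReal hi]
  · congr 1 with x
    simp only [Pi.mul_apply, gaussianPDF]
    rw [ENNReal.ofReal_mul (hnn x), mul_comm]
  · exact Filter.Eventually.of_forall fun x =>
      mul_nonneg (hnn x) (gaussianPDFReal_nonneg 0 1 x)


lemma sgss_LG1 (b : ℝ) :
    ∫⁻ x, ENNReal.ofReal (rexp (b * x)) ∂(gaussianReal 0 1) = ENNReal.ofReal (rexp (b ^ 2 / 2)) := by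
  rw [sgss_lintegral_gauss (fun x => rexp (b * x))
    (Real.measurable_exp.comp (measurable_id.const_mul b))
    (fun x => (Real.exp_pos _).le) (sgss_G1_integrable b), sgss_G1_int b]

lemma sgss_LG2 {c : ℝ} (hc : c < 1/2) :
    ∫⁻ x, ENNReal.ofReal (rexp (c * x ^ 2)) ∂(gaussianReal 0 1)
      = ENNReal.ofReal ((√(1 - 2 * c))⁻¹) := by
  rw [sgss_lintegral_gauss (fun x => rexp (c * x ^ 2))
    (Real.measurable_exp.comp ((measurable_id.pow_const 2).const_mul c))
    (fun x => (Real.exp_pos _).le) (sgss_G2_integrable hc), sgss_G2_int hc]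

lemma sgss_exp_sum {k : ℕ} (w : Fin k → ℝ) :
    ENNReal.ofReal (rexp (∑ j, w j)) = ∏ j, ENNReal.ofReal (rexp (w j)) := by
  rw [Real.exp_sum, ENNReal.ofReal_prod_of_nonneg (fun _ _ => (Real.exp_pos _).le)]

lemma sgss_pi_exp_linear {k : ℕ} (b : Fin k → ℝ) :
    ∫⁻ v : Fin k → ℝ, ENNReal.ofReal (rexp (∑ j, b j * v j))
        ∂(Measure.pi fun _ : Fin k => gaussianReal 0 1)
      = ENNReal.ofReal (rexp (∑ j, b j ^ 2 / 2)) := by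
  have h1 : ∫⁻ v : Fin k → ℝ, ENNReal.ofReal (rexp (∑ j, b j * v j))
        ∂(Measure.pi fun _ : Fin k => gaussianReal 0 1)
      = ∫⁻ v : Fin k → ℝ, ∏ j, ENNReal.ofReal (rexp (b j * v j))
        ∂(Measure.pi fun _ : Fin k => gaussianReal 0 1) :=
    lintegral_congr fun v => sgss_exp_sum (fun j => b j * v j)
  have h2 := sgss_lintegral_pi_prod (gaussianReal 0 1)
      (fun j a => ENNReal.ofReal (rexp (b j * a)))
      (fun j => ENNReal.measurable_ofReal.comp
        (Real.measurable_exp.comp (measurable_const.mul measurable_id)))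
  rw [h1, h2, sgss_exp_sum]
  exact Finset.prod_congr rfl fun j _ => sgss_LG1 (b j)

lemma sgss_pi_exp_sq {k : ℕ} {c : ℝ} (hc : c < 1/2) :
    ∫⁻ v : Fin k → ℝ, ENNReal.ofReal (rexp (c * ∑ j, v j ^ 2))
        ∂(Measure.pi fun _ : Fin k => gaussianReal 0 1)
      = ENNReal.ofReal ((√(1 - 2 * c))⁻¹ ^ k) := by
  have h1 : ∫⁻ v : Fin k → ℝ, ENNReal.ofReal (rexp (c * ∑ j, v j ^ 2))
        ∂(Measure.pi fun _ : Fin k => gaussianReal 0 1)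
      = ∫⁻ v : Fin k → ℝ, ∏ j, ENNReal.ofReal (rexp (c * v j ^ 2))
        ∂(Measure.pi fun _ : Fin k => gaussianReal 0 1) := by
    refine lintegral_congr fun v => ?_
    rw [Finset.mul_sum]
    exact sgss_exp_sum (fun j => c * v j ^ 2)
  have h2 := sgss_lintegral_pi_prod (k := k) (gaussianReal 0 1)
      (fun j a => ENNReal.ofReal (rexp (c * a ^ 2)))
      (fun j => ENNReal.measurable_ofReal.comp
        (Real.measurable_exp.comp ((measurable_id.pow_const 2).const_mul c)))
  rw [h1, h2, Finset.prod_congr rfl (fun (j : Fin k) _ => sgss_LG2 hc), Finset.prod_const,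
    Finset.card_univ, Fintype.card_fin, ← ENNReal.ofReal_pow (by positivity)]

lemma sgss_mgf (r m : ℕ) {c : ℝ} (hc : (r:ℝ) * (c^2/2) < 1/2) (s : Fin r → ℝ)
    (hs : ∀ i, s i ^ 2 = 1) :
    ∫⁻ X : Fin r → Fin m → ℝ,
        ENNReal.ofReal (rexp ((c^2/2) * ∑ j, (∑ i, s i * X i j)^2))
        ∂(Measure.pi fun _ : Fin r => Measure.pi fun _ : Fin m => gaussianReal 0 1)
      = ENNReal.ofReal ((√(1 - 2*((r:ℝ)*(c^2/2))))⁻¹ ^ m) := by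
  set γ := gaussianReal 0 1 with hγ
  set ν : Measure (Fin m → ℝ) := Measure.pi fun _ : Fin m => γ with hν
  set μ : Measure (Fin r → Fin m → ℝ) := Measure.pi fun _ : Fin r => ν with hμ
  -- Step A
  have stepA : ∀ X : Fin r → Fin m → ℝ,
      ENNReal.ofReal (rexp ((c^2/2) * ∑ j, (∑ i, s i * X i j)^2))
        = ∫⁻ g, ENNReal.ofReal (rexp (∑ j, (c * ∑ i, s i * X i j) * g j)) ∂ν := by
    intro X
    rw [sgss_pi_exp_linear (fun j => c * ∑ i, s i * X i j)]
    congr 2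
    rw [Finset.mul_sum]
    exact Finset.sum_congr rfl fun j _ => by ring
  -- measurability for swap
  have hmeas : Measurable (fun p : (Fin r → Fin m → ℝ) × (Fin m → ℝ) =>
      ENNReal.ofReal (rexp (∑ j, (c * ∑ i, s i * p.1 i j) * p.2 j))) := by
    refine ENNReal.measurable_ofReal.comp (Real.measurable_exp.comp ?_)
    refine Finset.measurable_sum _ fun j _ => Measurable.mul ?_ ?_
    · refine Measurable.const_mul ?_ c
      refine Finset.measurable_sum _ fun i _ => Measurable.const_mul ?_ (s i)
      exact (measurable_pi_apply j).comp ((measurable_pi_apply i).comp measurable_fst)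
    · exact (measurable_pi_apply j).comp measurable_snd
  -- Step C (inner integral for fixed g)
  have stepC : ∀ g : Fin m → ℝ,
      ∫⁻ X, ENNReal.ofReal (rexp (∑ j, (c * ∑ i, s i * X i j) * g j)) ∂μ
        = ENNReal.ofReal (rexp ((r:ℝ) * ((c^2/2) * ∑ j, g j ^ 2))) := by
    intro g
    have hexp : ∀ X : Fin r → Fin m → ℝ,
        (∑ j, (c * ∑ i, s i * X i j) * g j) = ∑ i, ∑ j, (c * s i * g j) * X i j := by
      intro X
      rw [Finset.sum_comm]
      refine Finset.sum_congr rfl fun j _ => ?_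
      rw [Finset.mul_sum, Finset.sum_mul]
      refine Finset.sum_congr rfl fun i _ => by ring
    have h1 : ∫⁻ X, ENNReal.ofReal (rexp (∑ j, (c * ∑ i, s i * X i j) * g j)) ∂μ
        = ∫⁻ X, ∏ i, ENNReal.ofReal (rexp (∑ j, (c * s i * g j) * X i j)) ∂μ := by
      refine lintegral_congr fun X => ?_
      rw [hexp X]
      exact sgss_exp_sum _
    have h2 := sgss_lintegral_pi_prod (k := r) ν
      (fun i v => ENNReal.ofReal (rexp (∑ j, (c * s i * g j) * v j)))
      (fun i => ENNReal.measurable_ofReal.comp (Real.measurable_exp.comp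
        (Finset.measurable_sum _ fun j _ => (measurable_pi_apply j).const_mul _)))
    rw [h1, h2]
    have h3 : ∀ i : Fin r,
        ∫⁻ v : Fin m → ℝ, ENNReal.ofReal (rexp (∑ j, (c * s i * g j) * v j)) ∂ν
          = ENNReal.ofReal (rexp ((c^2/2) * ∑ j, g j ^ 2)) := by
      intro i
      rw [sgss_pi_exp_linear (fun j => c * s i * g j)]
      congr 2
      rw [Finset.mul_sum]
      refine Finset.sum_congr rfl fun j _ => ?_
      have := hs i
      field_simp
      linear_combination (c ^ 2 * g j ^ 2) * this
    rw [Finset.prod_congr rfl fun i _ => h3 i, Finset.prod_const, Finset.card_univ,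
      Fintype.card_fin, ← ENNReal.ofReal_pow (Real.exp_pos _).le, ← Real.exp_nat_mul]
  -- assemble
  have swap := lintegral_lintegral_swap (μ := μ) (ν := ν)
    (f := fun X g => ENNReal.ofReal (rexp (∑ j, (c * ∑ i, s i * X i j) * g j)))
    hmeas.aemeasurable
  rw [lintegral_congr stepA, swap, lintegral_congr stepC]
  have h4 : ∀ g : Fin m → ℝ, (r:ℝ) * ((c^2/2) * ∑ j, g j ^ 2)
      = ((r:ℝ) * (c^2/2)) * ∑ j, g j ^ 2 := fun g => by ring
  simp_rw [h4]
  exact sgss_pi_exp_sq hc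

lemma sgss_W_meas (r m : ℕ) (s : Fin r → ℝ) :
    Measurable (fun X : Fin r → Fin m → ℝ => ∑ j, (∑ i, s i * X i j)^2) := by
  refine Finset.measurable_sum _ fun j _ => ?_
  refine Measurable.pow_const ?_ 2
  refine Finset.measurable_sum _ fun i _ => Measurable.const_mul ?_ (s i)
  exact (measurable_pi_apply j).comp (measurable_pi_apply i)

lemma sgss_tail (r m : ℕ) (hr : 0 < r) (hm : 0 < m) (s : Fin r → ℝ)
    (hs : ∀ i, s i ^ 2 = 1) :
    (Measure.pi fun _ : Fin r => Measure.pi fun _ : Fin m => gaussianReal 0 1)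
      {X : Fin r → Fin m → ℝ |
        ¬ Real.sqrt (∑ j, (∑ i, s i * X i j) ^ 2) ≤ 2 * r + Real.sqrt (r * m)}
      ≤ ENNReal.ofReal (rexp (-2 * r)) := by
  set μ := (Measure.pi fun _ : Fin r => Measure.pi fun _ : Fin m => gaussianReal 0 1) with hμd
  set q : ℝ := Real.sqrt (r * m) with hq
  have hrm : (0:ℝ) < (r:ℝ) * m := by positivity
  have hq0 : 0 < q := Real.sqrt_pos.2 hrm
  have hq2 : q * q = (r:ℝ) * m := Real.mul_self_sqrt hrm.le
  set u : ℝ := 2 * r + q with hu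
  have hr0 : (0:ℝ) < r := by exact_mod_cast hr
  have hu0 : 0 < u := by positivity
  set c : ℝ := Real.sqrt (2 / u) with hc
  have hc2 : c ^ 2 = 2 / u := Real.sq_sqrt (by positivity)
  have hc22 : c ^ 2 / 2 = 1 / u := by rw [hc2]; field_simp
  have hhalf : (r:ℝ) * (c ^ 2 / 2) < 1 / 2 := by
    rw [hc22, mul_one_div, div_lt_div_iff₀ hu0 two_pos]
    linarith
  have hmgf := sgss_mgf r m hhalf s hs
  -- the function and the threshold
  set F : (Fin r → Fin m → ℝ) → ℝ≥0∞ :=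
    fun X => ENNReal.ofReal (rexp ((c^2/2) * ∑ j, (∑ i, s i * X i j)^2)) with hF
  have hFmeas : Measurable F :=
    ENNReal.measurable_ofReal.comp (Real.measurable_exp.comp
      ((sgss_W_meas r m s).const_mul _))
  set ε : ℝ≥0∞ := ENNReal.ofReal (rexp u) with hε
  have hsubset : {X : Fin r → Fin m → ℝ |
      ¬ Real.sqrt (∑ j, (∑ i, s i * X i j) ^ 2) ≤ u} ⊆ {X | ε ≤ F X} := by
    intro X hX
    simp only [Set.mem_setOf_eq, not_le] at hX
    have hW0 : (0:ℝ) ≤ ∑ j, (∑ i, s i * X i j)^2 := by positivity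
    have hu2 : u ^ 2 < ∑ j, (∑ i, s i * X i j)^2 := by
      have := (Real.lt_sqrt hu0.le).mp hX
      linarith
    have : u ≤ (c^2/2) * ∑ j, (∑ i, s i * X i j)^2 := by
      rw [hc22]
      rw [div_mul_eq_mul_div, le_div_iff₀ hu0]
      nlinarith
    exact ENNReal.ofReal_le_ofReal (Real.exp_le_exp.2 this)
  have chern := mul_meas_ge_le_lintegral₀ (μ := μ) hFmeas.aemeasurable ε
  have hmono := measure_mono (μ := μ) hsubset
  have hkey : ε * μ {X : Fin r → Fin m → ℝ |
      ¬ Real.sqrt (∑ j, (∑ i, s i * X i j) ^ 2) ≤ u}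
      ≤ ENNReal.ofReal ((√(1 - 2*((r:ℝ)*(c^2/2))))⁻¹ ^ m) := by
    calc ε * μ _ ≤ ε * μ {X | ε ≤ F X} := by
          exact mul_le_mul_right hmono ε
      _ ≤ ∫⁻ X, F X ∂μ := chern
      _ = _ := hmgf
  -- extract bound
  set B : ℝ := (√(1 - 2*((r:ℝ)*(c^2/2))))⁻¹ ^ m with hB
  have hμle : μ {X : Fin r → Fin m → ℝ |
      ¬ Real.sqrt (∑ j, (∑ i, s i * X i j) ^ 2) ≤ u} ≤ ENNReal.ofReal (B * rexp (-u)) := by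
    have hεne : ε ≠ 0 := by
      simp [hε, Real.exp_pos]
    have hεtop : ε ≠ ⊤ := ENNReal.ofReal_ne_top
    have h' : μ {X : Fin r → Fin m → ℝ |
        ¬ Real.sqrt (∑ j, (∑ i, s i * X i j) ^ 2) ≤ u} * ε ≤ ENNReal.ofReal B := by
      rw [mul_comm]; exact hkey
    have := (ENNReal.le_div_iff_mul_le (Or.inl hεne) (Or.inl hεtop)).2 h'
    refine this.trans ?_
    rw [show ε = ENNReal.ofReal (rexp u) from rfl,
      ← ENNReal.ofReal_div_of_pos (Real.exp_pos _)]
    apply ENNReal.ofReal_le_ofReal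
    rw [Real.exp_neg, div_eq_mul_inv]
  refine hμle.trans (ENNReal.ofReal_le_ofReal ?_)
  -- real inequality: B * exp(-u) ≤ exp(-2r)
  have hfrac : 1 - 2*((r:ℝ)*(c^2/2)) = q / u := by
    rw [hc22]
    field_simp
    ring
  have hqu : (0:ℝ) < q / u := by positivity
  have hBval : B = Real.sqrt (u / q) ^ m := by
    rw [hB, hfrac, ← Real.sqrt_inv, inv_div]
  have hBpos : 0 < B := by
    rw [hBval]
    positivity
  have hlogB : Real.log B ≤ q := by
    rw [hBval, Real.log_pow, Real.log_sqrt (by positivity)]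
    have hlog : Real.log (u / q) ≤ u / q - 1 := Real.log_le_sub_one_of_pos (by positivity)
    have huq : u / q - 1 = 2 * r / q := by
      field_simp
      ring
    have hlog2 : Real.log (u/q) ≤ 2 * r / q := by rw [← huq]; exact hlog
    calc (m:ℝ) * (Real.log (u/q) / 2) ≤ (m:ℝ) * ((2 * r / q) / 2) :=
          mul_le_mul_of_nonneg_left (by linarith) (Nat.cast_nonneg m)
      _ = q := by
          field_simp
          nlinarith [hq2]
  have hBle : B ≤ rexp q := by
    calc B = rexp (Real.log B) := (Real.exp_log hBpos).symm
      _ ≤ rexp q := Real.exp_le_exp.2 hlogB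
  calc B * rexp (-u) ≤ rexp q * rexp (-u) := by
        apply mul_le_mul_of_nonneg_right hBle (Real.exp_pos _).le
    _ = rexp (q - u) := by rw [← Real.exp_add]; ring_nf
    _ = rexp (-2 * r) := by congr 1; rw [hu]; ring

/-- If `X 0, …, X (r-1)` are independent random vectors in `ℝ^m` with i.i.d. standard
normal coordinates, then with probability at least `1 - 2 exp(-r/2)`, for every sign
vector `s ∈ {-1,1}^r` the Euclidean norm of `∑ i, s i • X i` is at most `2r + √(rm)`. -/
theorem signed_gauss_sum_simple_bound
    (r m : ℕ) (hr : 0 < r) (hm : 0 < m) :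
    ENNReal.ofReal (1 - 2 * Real.exp (-(r : ℝ) / 2)) ≤
      (Measure.pi fun _ : Fin r => Measure.pi fun _ : Fin m => gaussianReal 0 1)
        {X : Fin r → Fin m → ℝ |
          ∀ s : Fin r → ℝ, (∀ i, s i = 1 ∨ s i = -1) →
            Real.sqrt (∑ j, (∑ i, s i * X i j) ^ 2) ≤
              2 * r + Real.sqrt (r * m)} := by
  classical
  set μ := (Measure.pi fun _ : Fin r => Measure.pi fun _ : Fin m => gaussianReal 0 1) with hμd
  set u : ℝ := 2 * r + Real.sqrt (r * m) with hu
  set sgn : (Fin r → Bool) → Fin r → ℝ := fun σ i => if σ i then 1 else -1 with hsgn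
  set G : Set (Fin r → Fin m → ℝ) := {X : Fin r → Fin m → ℝ |
          ∀ s : Fin r → ℝ, (∀ i, s i = 1 ∨ s i = -1) →
            Real.sqrt (∑ j, (∑ i, s i * X i j) ^ 2) ≤ u} with hG
  have hGeq : G = ⋂ σ : Fin r → Bool,
      {X : Fin r → Fin m → ℝ | Real.sqrt (∑ j, (∑ i, sgn σ i * X i j) ^ 2) ≤ u} := by
    ext X
    simp only [Set.mem_setOf_eq, Set.mem_iInter, hG]
    constructor
    · intro h σ
      refine h (sgn σ) fun i => ?_
      by_cases hσ : σ i <;> simp [hsgn, hσ]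
    · intro h s hs1
      have hseq : s = sgn (fun i => decide (s i = 1)) := by
        funext i
        rcases hs1 i with h1 | h1 <;> simp [hsgn, h1] <;> norm_num
      rw [hseq]
      exact h _
  have hσmeas : ∀ σ : Fin r → Bool, MeasurableSet
      {X : Fin r → Fin m → ℝ | Real.sqrt (∑ j, (∑ i, sgn σ i * X i j) ^ 2) ≤ u} :=
    fun σ => measurableSet_le
      (Real.continuous_sqrt.measurable.comp (sgss_W_meas r m (sgn σ))) measurable_const
  have hGmeas : MeasurableSet G := by
    rw [hGeq]; exact MeasurableSet.iInter fun σ => hσmeas σ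
  have hr0 : (0:ℝ) < r := by exact_mod_cast hr
  -- bound on complement
  have hcompl : μ Gᶜ ≤ ENNReal.ofReal (rexp (-(r:ℝ)/2)) := by
    have h1 : Gᶜ = ⋃ σ : Fin r → Bool,
        {X : Fin r → Fin m → ℝ | ¬ Real.sqrt (∑ j, (∑ i, sgn σ i * X i j) ^ 2) ≤ u} := by
      rw [hGeq, Set.compl_iInter]
      congr 1
    have h2 : μ Gᶜ ≤ ∑ σ : Fin r → Bool,
        μ {X : Fin r → Fin m → ℝ | ¬ Real.sqrt (∑ j, (∑ i, sgn σ i * X i j) ^ 2) ≤ u} := by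
      rw [h1]
      exact measure_iUnion_fintype_le _ _
    have h3 : ∀ σ : Fin r → Bool,
        μ {X : Fin r → Fin m → ℝ | ¬ Real.sqrt (∑ j, (∑ i, sgn σ i * X i j) ^ 2) ≤ u}
          ≤ ENNReal.ofReal (rexp (-2 * r)) := by
      intro σ
      refine sgss_tail r m hr hm (sgn σ) fun i => ?_
      by_cases hσ : σ i <;> simp [hsgn, hσ]
    refine h2.trans ((Finset.sum_le_sum fun σ _ => h3 σ).trans ?_)
    rw [Finset.sum_const, Finset.card_univ]
    have hcard : Fintype.card (Fin r → Bool) = 2 ^ r := by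
      simp [Fintype.card_fun]
    rw [hcard, nsmul_eq_mul]
    have hcast : ((2 ^ r : ℕ) : ℝ≥0∞) = ENNReal.ofReal ((2:ℝ) ^ r) := by
      rw [ENNReal.ofReal_pow (by norm_num)]
      norm_num
    rw [hcast, ← ENNReal.ofReal_mul (by positivity)]
    apply ENNReal.ofReal_le_ofReal
    have h2r : (2:ℝ) ^ r = rexp ((r:ℝ) * Real.log 2) := by
      rw [Real.exp_nat_mul, Real.exp_log two_pos]
    rw [h2r, ← Real.exp_add]
    apply Real.exp_le_exp.2
    nlinarith [Real.log_two_lt_d9, hr0]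
  -- conclude
  have hprob : IsProbabilityMeasure μ := by infer_instance
  have hadd : μ G + μ Gᶜ = 1 := by
    rw [measure_add_measure_compl hGmeas, measure_univ]
  have hGval : μ G = 1 - μ Gᶜ :=
    ENNReal.eq_sub_of_add_eq (measure_ne_top μ Gᶜ) hadd
  rw [hGval]
  have step1 : ENNReal.ofReal (1 - 2 * rexp (-(r:ℝ)/2)) ≤ 1 - ENNReal.ofReal (rexp (-(r:ℝ)/2)) := by
    refine ENNReal.le_sub_of_add_le_right ENNReal.ofReal_ne_top ?_
    by_cases hcase : 1 - 2 * rexp (-(r:ℝ)/2) ≤ 0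
    · rw [ENNReal.ofReal_eq_zero.2 hcase, zero_add]
      rw [← ENNReal.ofReal_one]
      apply ENNReal.ofReal_le_ofReal
      rw [← Real.exp_zero]
      apply Real.exp_le_exp.2
      linarith
    · push_neg at hcase
      rw [← ENNReal.ofReal_add (by linarith) (Real.exp_pos _).le, ← ENNReal.ofReal_one]
      apply ENNReal.ofReal_le_ofReal
      have := (Real.exp_pos (-(r:ℝ)/2)).le
      linarith
  exact step1.trans (tsub_le_tsub_left hcompl 1)
end

section
/- Let m be a positive integer and let u ∈ ℝ^m be a random vector whose m coordinates are i.i.d. Gaussian N(0, 1/m). Then for every ε ∈ (0,1), Pr[ |‖u‖_2² − 1| ≥ ε ] ≤ 2·exp(−m·ε²/8). -/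
open MeasureTheory ProbabilityTheory Real
open scoped NNReal ENNReal

variable {ι : Type*} [Fintype ι] {α : ι → Type*} [∀ i, MeasurableSpace (α i)]
  (μ : ∀ i, Measure (α i)) [∀ i, IsProbabilityMeasure (μ i)]

lemma aux_map_eval (j : ι) : (Measure.pi μ).map (fun u => u j) = μ j := by
  classical
  ext s hs
  rw [Measure.map_apply (measurable_pi_apply j) hs]
  have h1 : (fun u : ∀ i, α i => u j) ⁻¹' s
      = Set.pi Set.univ (Function.update (fun i => Set.univ) j s) := Set.eval_preimage
  rw [h1, Measure.pi_pi,
    Fintype.prod_eq_single j (fun i hij => by simp [Function.update_of_ne hij])]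
  simp

lemma aux_iIndep :
    iIndepFun (fun (j : ι) (u : ∀ i, α i) => u j) (Measure.pi μ) := by
  classical
  rw [ProbabilityTheory.iIndepFun_iff_measure_inter_preimage_eq_mul]
  intro S sets h_meas
  have h1 : (⋂ i ∈ S, (fun u : ∀ i, α i => u i) ⁻¹' sets i)
      = Set.pi Set.univ (fun i => if i ∈ S then sets i else Set.univ) := by
    ext u
    simp only [Set.mem_iInter, Set.mem_preimage, Set.mem_pi, Set.mem_univ, true_implies]
    constructor
    · intro h i
      by_cases hi : i ∈ S <;> simp [hi, h i]
    · intro h i hi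
      have := h i
      rwa [if_pos hi] at this
  have h2 : ∀ i ∈ S, (Measure.pi μ) ((fun u : ∀ i, α i => u i) ⁻¹' sets i) = μ i (sets i) := by
    intro i hi
    rw [← Measure.map_apply (measurable_pi_apply i) (h_meas i hi), aux_map_eval]
  calc (Measure.pi μ) (⋂ i ∈ S, (fun u : ∀ i, α i => u i) ⁻¹' sets i)
      = ∏ i : ι, μ i (if i ∈ S then sets i else Set.univ) := by rw [h1, Measure.pi_pi]
    _ = ∏ i : ι, (if i ∈ S then μ i (sets i) else 1) := by
        refine Finset.prod_congr rfl fun i _ => ?_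
        split <;> simp
    _ = ∏ i ∈ S, μ i (sets i) := by rw [Finset.prod_ite_mem, Finset.univ_inter]
    _ = ∏ i ∈ S, (Measure.pi μ) ((fun u : ∀ i, α i => u i) ⁻¹' sets i) := by
        exact Finset.prod_congr rfl fun i hi => (h2 i hi).symm

lemma aux_gauss_pointwise (v : ℝ≥0) (hv : v ≠ 0) (t : ℝ) (x : ℝ) :
    gaussianPDFReal 0 v x * Real.exp (t * x ^ 2)
      = (Real.sqrt (2 * π * v))⁻¹ * Real.exp (-((1 - 2 * t * v) / (2 * v)) * x ^ 2) := by
  have hv' : (0:ℝ) < v := lt_of_le_of_ne v.coe_nonneg (by exact_mod_cast hv.symm)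
  rw [gaussianPDFReal, mul_assoc, ← Real.exp_add]
  congr 1
  field_simp
  ring

lemma aux_gauss_int (v : ℝ≥0) (hv : v ≠ 0) (t : ℝ) (h : 2 * t * v < 1) :
    Integrable (fun x => Real.exp (t * x ^ 2)) (gaussianReal 0 v) := by
  have hv' : (0:ℝ) < v := lt_of_le_of_ne v.coe_nonneg (by exact_mod_cast hv.symm)
  have hb : 0 < (1 - 2 * t * v) / (2 * v) := by apply div_pos <;> linarith
  rw [gaussianReal_of_var_ne_zero 0 hv]
  rw [integrable_withDensity_iff (measurable_gaussianPDF 0 v)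
    (Filter.Eventually.of_forall fun x => ENNReal.ofReal_lt_top)]
  have heq : (fun x => Real.exp (t * x ^ 2) * (gaussianPDF 0 v x).toReal)
      = fun x => (Real.sqrt (2 * π * v))⁻¹ * Real.exp (-((1 - 2 * t * v) / (2 * v)) * x ^ 2) := by
    funext x
    rw [gaussianPDF, ENNReal.toReal_ofReal (gaussianPDFReal_nonneg 0 v x), mul_comm,
      aux_gauss_pointwise v hv t x]
  rw [heq]
  exact (integrable_exp_neg_mul_sq hb).const_mul _

lemma aux_gauss_mgf (v : ℝ≥0) (hv : v ≠ 0) (t : ℝ) (h : 2 * t * v < 1) :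
    mgf (fun x => x ^ 2) (gaussianReal 0 v) t = Real.sqrt (1 - 2 * t * v)⁻¹ := by
  have hv' : (0:ℝ) < v := lt_of_le_of_ne v.coe_nonneg (by exact_mod_cast hv.symm)
  have hb : 0 < (1 - 2 * t * v) / (2 * v) := by apply div_pos <;> linarith
  rw [mgf, gaussianReal_of_var_ne_zero 0 hv]
  have hd : gaussianPDF 0 v = fun x => ((Real.toNNReal (gaussianPDFReal 0 v x) : ℝ≥0) : ℝ≥0∞) := by
    funext x; rw [gaussianPDF, ENNReal.ofReal]
  rw [hd, integral_withDensity_eq_integral_smul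
    ((measurable_gaussianPDFReal 0 v).real_toNNReal) _]
  have heq : (fun x => (Real.toNNReal (gaussianPDFReal 0 v x)) • Real.exp (t * x ^ 2))
      = fun x => (Real.sqrt (2 * π * v))⁻¹ * Real.exp (-((1 - 2 * t * v) / (2 * v)) * x ^ 2) := by
    funext x
    rw [NNReal.smul_def, smul_eq_mul, Real.coe_toNNReal _ (gaussianPDFReal_nonneg 0 v x),
      aux_gauss_pointwise v hv t x]
  rw [heq, integral_const_mul, integral_gaussian]
  rw [← Real.sqrt_inv, ← Real.sqrt_mul (by positivity)]
  congr 1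
  have hne : (1 - 2 * t * (v:ℝ)) ≠ 0 := by linarith
  have hpi : π ≠ 0 := Real.pi_ne_zero
  rw [eq_comm, inv_eq_iff_eq_inv]
  field_simp

lemma aux_log_one_sub {x : ℝ} (hx : 0 < x) (hx2 : x ≤ 1/2) :
    -Real.log (1 - x) ≤ x + x ^ 2 := by
  have h1 : 0 < 1 - x := by linarith
  have hq := Real.quadratic_le_exp_of_nonneg (show 0 ≤ x + x ^ 2 by positivity)
  have h2 : (1 - x)⁻¹ ≤ Real.exp (x + x ^ 2) := by
    rw [inv_le_iff_one_le_mul₀ h1]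
    nlinarith [Real.exp_pos (x + x ^ 2)]
  calc -Real.log (1 - x) = Real.log (1 - x)⁻¹ := (Real.log_inv _).symm
    _ ≤ x + x ^ 2 := (Real.log_le_iff_le_exp (by positivity)).mpr h2

lemma aux_log_one_add {x : ℝ} (hx : 0 < x) :
    x - x ^ 2 ≤ Real.log (1 + x) := by
  have h1 : (0:ℝ) < 1 + x := by linarith
  rw [Real.le_log_iff_exp_le h1]
  have hE : 1 + (x ^ 2 - x) ≤ Real.exp (x ^ 2 - x) := by
    linarith [Real.add_one_le_exp (x ^ 2 - x)]
  have hprod : Real.exp (x - x ^ 2) * Real.exp (x ^ 2 - x) = 1 := by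
    rw [← Real.exp_add, show (x - x ^ 2) + (x ^ 2 - x) = 0 by ring, Real.exp_zero]
  have hpos : 0 < 1 + x ^ 2 - x := by nlinarith [sq_nonneg (x - 1)]
  nlinarith [Real.exp_pos (x - x ^ 2), mul_le_mul_of_nonneg_left hE (Real.exp_pos (x - x ^ 2)).le]

set_option maxHeartbeats 1000000 in
/-- Concentration of the squared norm of a Gaussian vector: if `u ∈ ℝ^m` has i.i.d.
`N(0, 1/m)` coordinates, then for every `ε ∈ (0,1)`,
`Pr[|‖u‖² − 1| ≥ ε] ≤ 2·exp(−m·ε²/8)`. -/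
theorem gaussian_sq_norm_concentration
    (m : ℕ) (hm : 0 < m) (ε : ℝ) (hε : ε ∈ Set.Ioo (0 : ℝ) 1) :
    (Measure.pi fun _ : Fin m => gaussianReal 0 ((m : ℝ≥0)⁻¹))
        {u : Fin m → ℝ | ε ≤ |(∑ j, (u j) ^ 2) - 1|} ≤
      ENNReal.ofReal (2 * Real.exp (-(m : ℝ) * ε ^ 2 / 8)) := by
  obtain ⟨hε0, hε1⟩ := hε
  set v : ℝ≥0 := (m : ℝ≥0)⁻¹ with hv_def
  have hv : v ≠ 0 := inv_ne_zero (by exact_mod_cast hm.ne')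
  have hm' : (0:ℝ) < m := by exact_mod_cast hm
  have hvr : (v : ℝ) = ((m:ℝ))⁻¹ := by
    rw [hv_def]; push_cast; ring
  set μpi := Measure.pi fun _ : Fin m => gaussianReal 0 v with hμpi
  have : IsProbabilityMeasure μpi := by infer_instance
  set X : Fin m → (Fin m → ℝ) → ℝ := fun j u => (u j) ^ 2 with hX
  have hXmeas : ∀ j, Measurable (X j) := fun j => (measurable_pi_apply j).pow_const 2
  have hindep : iIndepFun X μpi := by
    have := (aux_iIndep (fun _ : Fin m => gaussianReal 0 v)).comp
      (fun _ => fun x : ℝ => x ^ 2) (fun _ => measurable_id.pow_const 2)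
    exact this
  have hS : (fun u : Fin m → ℝ => ∑ j, (u j) ^ 2) = ∑ j, X j := by
    funext u; rw [Finset.sum_apply]
  -- per-coordinate integrability and mgf
  have hint : ∀ (t : ℝ), 2 * t * (v:ℝ) < 1 → ∀ j,
      Integrable (fun u => Real.exp (t * X j u)) μpi := by
    intro t ht j
    have h1 := aux_gauss_int v hv t ht
    rw [← aux_map_eval (fun _ : Fin m => gaussianReal 0 v) j] at h1
    have h2 := (integrable_map_measure
      ((by measurability : Measurable fun x : ℝ => Real.exp (t * x ^ 2)).aestronglyMeasurable)
      (measurable_pi_apply j).aemeasurable).mp h1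
    exact h2
  have hmgf : ∀ (t : ℝ), 2 * t * (v:ℝ) < 1 → ∀ j,
      mgf (X j) μpi t = Real.sqrt (1 - 2 * t * v)⁻¹ := by
    intro t ht j
    rw [← aux_gauss_mgf v hv t ht]
    unfold mgf
    rw [← aux_map_eval (fun _ : Fin m => gaussianReal 0 v) j,
      integral_map (measurable_pi_apply j).aemeasurable
      ((by measurability : Measurable fun x : ℝ => Real.exp (t * x ^ 2)).aestronglyMeasurable)]
  have hmgfS : ∀ (t : ℝ), 2 * t * (v:ℝ) < 1 →
      mgf (∑ j, X j) μpi t = (Real.sqrt (1 - 2 * t * v)⁻¹) ^ m := by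
    intro t ht
    rw [hindep.mgf_sum hXmeas]
    rw [Finset.prod_congr rfl (fun j _ => hmgf t ht j), Finset.prod_const, Finset.card_univ,
      Fintype.card_fin]
  -- generic tail bound
  have tail : ∀ (t c r : ℝ), 0 < r → Real.sqrt r ^ m = Real.exp (Real.log r * (m / 2)) := by
    intro t c r hr
    rw [Real.sqrt_eq_rpow, ← Real.rpow_natCast (r ^ (1/2:ℝ)) m, ← Real.rpow_mul hr.le,
      Real.rpow_def_of_pos hr]
    congr 1
    ring
  -- upper tail
  set t1 : ℝ := m * ε / 4 with ht1_def
  have h2t1 : 2 * t1 * (v:ℝ) = ε / 2 := by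
    rw [hvr, ht1_def]; field_simp; ring
  have ht1lt : 2 * t1 * (v:ℝ) < 1 := by rw [h2t1]; linarith
  have hr1 : (0:ℝ) < (1 - ε/2)⁻¹ := by
    have : (0:ℝ) < 1 - ε/2 := by linarith
    positivity
  have key1 := aux_log_one_sub (x := ε/2) (by linarith) (by linarith)
  have bound1 : (μpi {u | 1 + ε ≤ (∑ j, X j) u}).toReal
      ≤ Real.exp (-t1 * (1 + ε)) * mgf (∑ j, X j) μpi t1 :=
    measure_ge_le_exp_mul_mgf (1 + ε) (by positivity)
      (hindep.integrable_exp_mul_sum hXmeas (fun j _ => hint t1 ht1lt j))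
  have hmgfval1 : mgf (∑ j, X j) μpi t1 = Real.exp (Real.log ((1 - ε/2)⁻¹) * (m / 2)) := by
    rw [hmgfS t1 ht1lt, h2t1, tail t1 0 _ hr1]
  have up : (μpi {u | 1 + ε ≤ (∑ j, X j) u}).toReal ≤ Real.exp (-(m:ℝ) * ε ^ 2 / 8) := by
    refine bound1.trans ?_
    rw [hmgfval1, ← Real.exp_add, Real.exp_le_exp, Real.log_inv]
    have hk := mul_le_mul_of_nonneg_right key1 (show (0:ℝ) ≤ m / 2 by positivity)
    rw [ht1_def]
    nlinarith [hk, hm', hε0]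
  -- lower tail
  set t2 : ℝ := -(m * ε / 4) with ht2_def
  have h2t2 : 2 * t2 * (v:ℝ) = -(ε / 2) := by
    rw [hvr, ht2_def]; field_simp; ring
  have ht2lt : 2 * t2 * (v:ℝ) < 1 := by rw [h2t2]; linarith
  have hr2 : (0:ℝ) < (1 + ε/2)⁻¹ := by positivity
  have key2 := aux_log_one_add (x := ε/2) (by linarith)
  have bound2 : (μpi {u | (∑ j, X j) u ≤ 1 - ε}).toReal
      ≤ Real.exp (-t2 * (1 - ε)) * mgf (∑ j, X j) μpi t2 :=
    measure_le_le_exp_mul_mgf (1 - ε) (by rw [ht2_def]; nlinarith)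
      (hindep.integrable_exp_mul_sum hXmeas (fun j _ => hint t2 ht2lt j))
  have hmgfval2 : mgf (∑ j, X j) μpi t2 = Real.exp (Real.log ((1 + ε/2)⁻¹) * (m / 2)) := by
    rw [hmgfS t2 ht2lt, h2t2, show 1 - -(ε/2) = 1 + ε/2 by ring, tail t2 0 _ hr2]
  have lo : (μpi {u | (∑ j, X j) u ≤ 1 - ε}).toReal ≤ Real.exp (-(m:ℝ) * ε ^ 2 / 8) := by
    refine bound2.trans ?_
    rw [hmgfval2, ← Real.exp_add, Real.exp_le_exp, Real.log_inv]
    have hk := mul_le_mul_of_nonneg_right key2 (show (0:ℝ) ≤ m / 2 by positivity)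
    rw [ht2_def]
    nlinarith [hk, hm', hε0]
  -- union bound
  have hsub : {u : Fin m → ℝ | ε ≤ |(∑ j, (u j) ^ 2) - 1|}
      ⊆ {u | 1 + ε ≤ (∑ j, X j) u} ∪ {u | (∑ j, X j) u ≤ 1 - ε} := by
    intro u hu
    have hu' : ε ≤ |(∑ j, X j) u - 1| := by rwa [← congrFun hS u]
    rcases le_abs.mp hu' with h | h
    · left; simp only [Set.mem_setOf_eq]; linarith
    · right; simp only [Set.mem_setOf_eq]; linarith
  have hof : ∀ s : Set (Fin m → ℝ), (μpi s).toReal ≤ Real.exp (-(m:ℝ) * ε ^ 2 / 8) →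
      μpi s ≤ ENNReal.ofReal (Real.exp (-(m:ℝ) * ε ^ 2 / 8)) := by
    intro s hs
    rw [← ENNReal.ofReal_toReal (measure_ne_top μpi s)]
    exact ENNReal.ofReal_le_ofReal hs
  calc μpi {u : Fin m → ℝ | ε ≤ |(∑ j, (u j) ^ 2) - 1|}
      ≤ μpi ({u | 1 + ε ≤ (∑ j, X j) u} ∪ {u | (∑ j, X j) u ≤ 1 - ε}) := measure_mono hsub
    _ ≤ μpi {u | 1 + ε ≤ (∑ j, X j) u} + μpi {u | (∑ j, X j) u ≤ 1 - ε} := measure_union_le _ _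
    _ ≤ ENNReal.ofReal (Real.exp (-(m:ℝ) * ε ^ 2 / 8))
        + ENNReal.ofReal (Real.exp (-(m:ℝ) * ε ^ 2 / 8)) := add_le_add (hof _ up) (hof _ lo)
    _ = ENNReal.ofReal (2 * Real.exp (-(m:ℝ) * ε ^ 2 / 8)) := by
        rw [← ENNReal.ofReal_add (Real.exp_nonneg _) (Real.exp_nonneg _)]
        ring_nf
end

section
/- Let k ≥ 1 and let v_1, …, v_k ∈ ℝ^n be linearly independent vectors satisfying ⟨v_i, v_j⟩ = 1 for all i ≠ j and ‖v_i‖² > i·(2 + ln k) for every i = 1, …, k. Then there exist pairwise orthogonal vectors u_1, …, u_k ∈ ℝ^n such that u_1 = v_1; for every i = 2, …, k, ‖u_i‖² > ‖v_i‖² − 1 and ‖v_i‖² − 1 ≥ i·(1 + ln k); and each u_i (i = 2, …, k) is an affine combination of v_1, …, v_i, i.e., u_i = Σ_{j=1}^{i} γ_j v_j with Σ_{j=1}^{i} γ_j = 1. -/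
open scoped RealInnerProductSpace

/-- Nearly-to-fully orthogonal rows: given linearly independent `v 0, …, v (k-1)` in `ℝⁿ`
with pairwise inner products equal to `1` and `‖v i‖² > (i+1)(2 + ln k)` (where the vector
`v i` is the `(i+1)`-st vector, `i : Fin k` being 0-indexed), there exist pairwise
orthogonal `u 0, …, u (k-1)` with `u 0 = v 0`, and for every `i ≠ 0`:
`‖u i‖² > ‖v i‖² − 1`, `‖v i‖² − 1 ≥ (i+1)(1 + ln k)`, and `u i` is an affine
combination of `v 0, …, v i`. -/
theorem nearly_to_fully_orthogonal
    (k n : ℕ) (hk : 0 < k) (v : Fin k → EuclideanSpace ℝ (Fin n))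
    (hind : LinearIndependent ℝ v)
    (hinner : ∀ i j, i ≠ j → ⟪v i, v j⟫ = 1)
    (hnorm : ∀ i : Fin k, ‖v i‖ ^ 2 > ((i : ℕ) + 1) * (2 + Real.log k)) :
    ∃ u : Fin k → EuclideanSpace ℝ (Fin n),
      (∀ i j, i ≠ j → ⟪u i, u j⟫ = 0) ∧
      u ⟨0, hk⟩ = v ⟨0, hk⟩ ∧
      (∀ i : Fin k, i ≠ ⟨0, hk⟩ →
        ‖u i‖ ^ 2 > ‖v i‖ ^ 2 - 1 ∧
        ‖v i‖ ^ 2 - 1 ≥ ((i : ℕ) + 1) * (1 + Real.log k) ∧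
        ∃ γ : Fin k → ℝ,
          u i = ∑ j ∈ Finset.Iic i, γ j • v j ∧ ∑ j ∈ Finset.Iic i, γ j = 1) := by
  classical
  have hlog : (0:ℝ) ≤ Real.log k := Real.log_nonneg (by exact_mod_cast hk)
  set a : Fin k → ℝ := fun j => ‖v j‖ ^ 2 with ha_def
  have hcast : ∀ j : Fin k, (1:ℝ) ≤ ((j:ℕ):ℝ) + 1 := by
    intro j
    have : (0:ℝ) ≤ ((j:ℕ):ℝ) := Nat.cast_nonneg _
    linarith
  have ha2 : ∀ j : Fin k, 2 ≤ a j := by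
    intro j
    have h : (((j:ℕ):ℝ) + 1) * (2 + Real.log (k:ℕ)) < a j := hnorm j
    have hc := hcast j
    have hmul : (0:ℝ) ≤ (((j:ℕ):ℝ) + 1) * Real.log (k:ℕ) :=
      mul_nonneg (by linarith) hlog
    have hsplit : (((j:ℕ):ℝ) + 1) * (2 + Real.log (k:ℕ))
        = 2 * (((j:ℕ):ℝ) + 1) + (((j:ℕ):ℝ) + 1) * Real.log (k:ℕ) := by ring
    linarith
  have ha1 : ∀ j : Fin k, (0:ℝ) < a j - 1 := fun j => by have := ha2 j; linarith
  set g : Fin k → ℝ := fun j => 1 / (a j - 1) with hg_def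
  have hg : ∀ j, 0 < g j := fun j => by
    have := ha1 j; simpa [hg_def] using one_div_pos.mpr this
  have hgmul : ∀ j, g j * (a j - 1) = 1 := fun j => by
    have := ha1 j
    exact one_div_mul_cancel this.ne'
  set u : Fin k → EuclideanSpace ℝ (Fin n) :=
    fun i => v i + ∑ j ∈ Finset.Iio i, g j • (v i - v j) with hu_def
  have hself : ∀ j : Fin k, ⟪v j, v j⟫ = a j := fun j => real_inner_self_eq_norm_sq (v j)
  -- expansion of ⟪u i, x⟫
  have hexpL : ∀ (i : Fin k) (x : EuclideanSpace ℝ (Fin n)),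
      ⟪u i, x⟫ = ⟪v i, x⟫ + ∑ j ∈ Finset.Iio i, g j * (⟪v i, x⟫ - ⟪v j, x⟫) := by
    intro i x
    show ⟪v i + ∑ j ∈ Finset.Iio i, g j • (v i - v j), x⟫ = _
    rw [inner_add_left, sum_inner]
    congr 1
    refine Finset.sum_congr rfl fun j hj => ?_
    rw [real_inner_smul_left, inner_sub_left]
  -- u i is orthogonal to v l for l < i
  have huv : ∀ i l : Fin k, l < i → ⟪u i, v l⟫ = 0 := by
    intro i l hl
    have hil : ⟪v i, v l⟫ = 1 := hinner i l (ne_of_gt hl)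
    rw [hexpL i (v l)]
    have hsum : ∑ j ∈ Finset.Iio i, g j * (⟪v i, v l⟫ - ⟪v j, v l⟫) = -1 := by
      rw [Finset.sum_eq_single l]
      · rw [hil, hself l]
        nlinarith [hgmul l]
      · intro j hj hjl
        rw [hil, hinner j l hjl]
        ring
      · intro h
        exact absurd (Finset.mem_Iio.mpr hl) h
    rw [hsum, hil]; ring
  -- pairwise orthogonality
  have huu : ∀ i j : Fin k, j < i → ⟪u i, u j⟫ = 0 := by
    intro i j hij
    have h0 : ∀ m : Fin k, m ≤ j → ⟪u i, v m⟫ = 0 := fun m hm =>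
      huv i m (lt_of_le_of_lt hm hij)
    have hexp : ⟪u i, u j⟫ =
        ⟪u i, v j⟫ + ∑ l ∈ Finset.Iio j, g l * (⟪u i, v j⟫ - ⟪u i, v l⟫) := by
      have : u j = v j + ∑ l ∈ Finset.Iio j, g l • (v j - v l) := rfl
      rw [this, inner_add_right, inner_sum]
      congr 1
      refine Finset.sum_congr rfl fun l hl => ?_
      rw [real_inner_smul_right, inner_sub_right]
    rw [hexp, h0 j le_rfl, Finset.sum_eq_zero, add_zero]
    intro l hl
    rw [h0 l (le_of_lt (Finset.mem_Iio.mp hl))]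
    ring
  -- u at 0 equals v at 0
  have hIio0 : Finset.Iio (⟨0, hk⟩ : Fin k) = ∅ := by
    ext j
    simp [Finset.mem_Iio, Fin.lt_def]
  have hu0 : u ⟨0, hk⟩ = v ⟨0, hk⟩ := by
    simp [hu_def, hIio0]
  refine ⟨u, ?_, hu0, ?_⟩
  · intro i j hij
    rcases lt_or_gt_of_ne hij with h | h
    · rw [real_inner_comm]; exact huu j i h
    · exact huu i j h
  · intro i hi
    set γtot : ℝ := 1 + ∑ j ∈ Finset.Iio i, g j with hγtot_def
    have hγ1 : 1 ≤ γtot := by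
      have : 0 ≤ ∑ j ∈ Finset.Iio i, g j :=
        Finset.sum_nonneg fun j _ => (hg j).le
      rw [hγtot_def]; linarith
    -- inner product of u i with v i
    have huvi : ⟪u i, v i⟫ = a i + (γtot - 1) * (a i - 1) := by
      rw [hexpL i (v i), hself i]
      have : ∑ j ∈ Finset.Iio i, g j * (a i - ⟪v j, v i⟫)
          = ∑ j ∈ Finset.Iio i, g j * (a i - 1) := by
        refine Finset.sum_congr rfl fun j hj => ?_
        rw [hinner j i (ne_of_lt (Finset.mem_Iio.mp hj))]
      rw [this, ← Finset.sum_mul, hγtot_def]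
      ring
    have hnormu : ‖u i‖ ^ 2 = γtot * (a i + (γtot - 1) * (a i - 1)) := by
      rw [← real_inner_self_eq_norm_sq]
      have hexp : ⟪u i, u i⟫ =
          ⟪u i, v i⟫ + ∑ j ∈ Finset.Iio i, g j * (⟪u i, v i⟫ - ⟪u i, v j⟫) := by
        conv_lhs => rw [show u i = v i + ∑ j ∈ Finset.Iio i, g j • (v i - v j) from rfl]
        rw [inner_add_right, inner_sum]
        congr 1
        refine Finset.sum_congr rfl fun j hj => ?_
        rw [real_inner_smul_right, inner_sub_right]
      rw [hexp]
      have : ∑ j ∈ Finset.Iio i, g j * (⟪u i, v i⟫ - ⟪u i, v j⟫)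
          = ∑ j ∈ Finset.Iio i, g j * ⟪u i, v i⟫ := by
        refine Finset.sum_congr rfl fun j hj => ?_
        rw [huv i j (Finset.mem_Iio.mp hj)]
        ring
      rw [this, ← Finset.sum_mul, huvi, hγtot_def]
      ring
    have hai := ha1 i
    have hai0 : (0:ℝ) ≤ a i := by have := ha2 i; linarith
    refine ⟨?_, ?_, ?_⟩
    · rw [hnormu]
      show a i - 1 < _
      nlinarith [mul_nonneg (sub_nonneg.mpr hγ1) hai0,
        mul_nonneg (mul_nonneg (le_trans zero_le_one hγ1) (sub_nonneg.mpr hγ1)) hai.le]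
    · have h : (((i:ℕ):ℝ) + 1) * (2 + Real.log (k:ℕ)) < a i := hnorm i
      have hc := hcast i
      have hsplit : (((i:ℕ):ℝ) + 1) * (2 + Real.log (k:ℕ))
          = (((i:ℕ):ℝ) + 1) * (1 + Real.log (k:ℕ)) + (((i:ℕ):ℝ) + 1) := by ring
      show (((i:ℕ):ℝ) + 1) * (1 + Real.log (k:ℕ)) ≤ a i - 1
      linarith
    · refine ⟨fun j => if j = i then γtot else -g j, ?_, ?_⟩
      · have hins : Finset.Iic i = insert i (Finset.Iio i) := (Finset.Iio_insert i).symm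
        rw [hins, Finset.sum_insert (by simp),
          show ((fun j : Fin k => if j = i then γtot else -g j) i • v i) = γtot • v i by
            simp]
        have hrest : ∑ j ∈ Finset.Iio i, (if j = i then γtot else -g j) • v j
            = ∑ j ∈ Finset.Iio i, (-g j) • v j := by
          refine Finset.sum_congr rfl fun j hj => ?_
          rw [if_neg (ne_of_lt (Finset.mem_Iio.mp hj))]
        rw [hrest]
        show v i + ∑ j ∈ Finset.Iio i, g j • (v i - v j) = _
        rw [Finset.sum_congr rfl (fun j _ => smul_sub (g j) (v i) (v j)),
          Finset.sum_sub_distrib, ← Finset.sum_smul, hγtot_def]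
        simp only [neg_smul, Finset.sum_neg_distrib, add_smul, one_smul]
        abel
      · have hins : Finset.Iic i = insert i (Finset.Iio i) := (Finset.Iio_insert i).symm
        rw [hins, Finset.sum_insert (by simp), if_pos rfl]
        have hrest : ∑ j ∈ Finset.Iio i, (if j = i then γtot else -g j)
            = ∑ j ∈ Finset.Iio i, (-g j) := by
          refine Finset.sum_congr rfl fun j hj => ?_
          rw [if_neg (ne_of_lt (Finset.mem_Iio.mp hj))]
        rw [hrest, hγtot_def, Finset.sum_neg_distrib]
        ring
end

section
/- Let A ∈ ℝ^{k×n} be a matrix, let h ∈ {1,…,n} be an index such that the column A_{•h} is nonzero, and let M ⊆ {1,…,n} \ {h}. Then there exists an invertible matrix G ∈ ℝ^{k×k} such that, writing A' = G·A: (i) A'_{1h} = 1 and A'_{ih} = 0 for all i ≥ 2; and (ii) for every i ≥ 2, the restriction of row i to the coordinates in M is orthogonal to the restriction of row 1 to the coordinates in M, i.e., Σ_{j∈M} A'_{ij}·A'_{1j} = 0. -/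
private theorem step1_aux (k : ℕ) (z : Fin k) (a : Fin k → ℝ) (ha : a ≠ 0) :
    ∃ G : Matrix (Fin k) (Fin k) ℝ, IsUnit G ∧ G.mulVec a = Pi.single z 1 := by
  classical
  have hli : LinearIndepOn ℝ id ({a} : Set (Fin k → ℝ)) :=
    LinearIndepOn.singleton ha
  let b := Module.Basis.extend hli
  have hmem : a ∈ hli.extend (Set.subset_univ _) := hli.subset_extend _ rfl
  let e0 : _ ≃ Fin k := b.indexEquiv (Pi.basisFun ℝ (Fin k))
  let ia : ↥(hli.extend (Set.subset_univ _)) := ⟨a, hmem⟩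
  let e : _ ≃ Fin k := e0.trans (Equiv.swap (e0 ia) z)
  let b' := b.reindex e
  have hb' : b' z = a := by
    have : e.symm z = ia := by
      simp only [e, Equiv.symm_trans_apply, Equiv.symm_swap, Equiv.swap_apply_right]
      exact e0.symm_apply_apply ia
    rw [Module.Basis.reindex_apply, this]
    exact Module.Basis.extend_apply_self hli ia
  let f := b'.equiv (Pi.basisFun ℝ (Fin k)) (Equiv.refl _)
  refine ⟨LinearMap.toMatrix' (f : (Fin k → ℝ) →ₗ[ℝ] (Fin k → ℝ)), ?_, ?_⟩
  · rw [isUnit_iff_exists]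
    refine ⟨LinearMap.toMatrix' ((f.symm : (Fin k → ℝ) ≃ₗ[ℝ] (Fin k → ℝ)) :
      (Fin k → ℝ) →ₗ[ℝ] (Fin k → ℝ)), ?_, ?_⟩ <;>
    · rw [← LinearMap.toMatrix'_comp]
      simp [LinearMap.toMatrix'_id, LinearEquiv.comp_coe]
  · have : (LinearMap.toMatrix' (f : (Fin k → ℝ) →ₗ[ℝ] (Fin k → ℝ))).mulVec a = f a := by
      rw [← Matrix.toLin'_apply, Matrix.toLin'_toMatrix']
      simp
    rw [this, ← hb', Module.Basis.equiv_apply, Equiv.refl_apply, Pi.basisFun_apply]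

/-- Row reduction underlying the sufficient statistic: if column `h` of
`A ∈ ℝ^{k×n}` is nonzero and `M ⊆ [n] \ {h}`, then there is an invertible
`G ∈ ℝ^{k×k}` such that, with `A' = G·A`: the first entry of column `h` of `A'`
is `1` and all other entries of that column vanish, and every row `i ≥ 2` of `A'`
restricted to `M` is orthogonal to the first row restricted to `M`. -/
theorem row_reduction_for_sufficient_statistic
    (k n : ℕ) (hk : 0 < k) (A : Matrix (Fin k) (Fin n) ℝ) (h : Fin n)
    (hcol : ∃ i, A i h ≠ 0) (M : Finset (Fin n)) (hM : h ∉ M) :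
    ∃ G : Matrix (Fin k) (Fin k) ℝ, IsUnit G ∧
      (G * A) ⟨0, hk⟩ h = 1 ∧
      (∀ i : Fin k, i ≠ ⟨0, hk⟩ → (G * A) i h = 0) ∧
      (∀ i : Fin k, i ≠ ⟨0, hk⟩ → ∑ j ∈ M, (G * A) i j * (G * A) ⟨0, hk⟩ j = 0) := by
  classical
  set z : Fin k := ⟨0, hk⟩ with hz
  obtain ⟨i₀, hi₀⟩ := hcol
  have ha : (fun i => A i h) ≠ 0 := fun he => hi₀ (congrFun he i₀)
  obtain ⟨G1, hG1u, hG1v⟩ := step1_aux k z _ ha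
  set A1 := G1 * A with hA1
  have hcolh : ∀ i, A1 i h = (Pi.single z (1:ℝ) : Fin k → ℝ) i := by
    intro i
    have := congrFun hG1v i
    simpa [Matrix.mulVec, dotProduct, Matrix.mul_apply, hA1] using this
  -- Euclidean space setup
  let r : Fin k → EuclideanSpace ℝ {x // x ∈ M} := fun i => WithLp.toLp 2 (fun j => A1 i j.1)
  let V : Submodule ℝ (EuclideanSpace ℝ {x // x ∈ M}) :=
    Submodule.span ℝ (Set.range fun i : {i : Fin k // i ≠ z} => r i.1)
  let u : EuclideanSpace ℝ {x // x ∈ M} := r z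
  let v : EuclideanSpace ℝ {x // x ∈ M} := V.orthogonalProjectionOnto u
  obtain ⟨c, hc⟩ := (Submodule.mem_span_range_iff_exists_fun ℝ).mp (SetLike.coe_mem (V.orthogonalProjectionOnto u))
  let c' : Fin k → ℝ := fun i => if hi : i = z then 0 else c ⟨i, hi⟩
  have hc'z : c' z = 0 := dif_pos rfl
  let N : Matrix (Fin k) (Fin k) ℝ := Matrix.of fun i j => if i = z then c' j else 0
  have hNN : N * N = 0 := by
    ext i j
    simp only [Matrix.mul_apply, Matrix.zero_apply, N, Matrix.of_apply]
    rw [Finset.sum_eq_single z]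
    · simp [hc'z]
    · intro b _ hb; simp [if_neg hb]
    · simp
  have h1 : (1 - N) * (1 + N) = 1 := by
    have : (1 - N) * (1 + N) = 1 - N * N := by noncomm_ring
    rw [this, hNN, sub_zero]
  have h2 : (1 + N) * (1 - N) = 1 := by
    have : (1 + N) * (1 - N) = 1 - N * N := by noncomm_ring
    rw [this, hNN, sub_zero]
  set E : Matrix (Fin k) (Fin k) ℝ := 1 - N with hE
  have hEA : ∀ i j, (E * A1) i j = A1 i j - (if i = z then ∑ l, c' l * A1 l j else 0) := by
    intro i j
    rw [hE, Matrix.sub_mul, Matrix.one_mul, Matrix.sub_apply]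
    congr 1
    simp only [Matrix.mul_apply, N, Matrix.of_apply, ite_mul, zero_mul]
    split
    · rfl
    · simp
  -- the sum over c' equals the projection coordinates
  have hsum : ∀ j : Fin n, ∑ l, c' l * A1 l j = ∑ i : {i : Fin k // i ≠ z}, c i * A1 i.1 j := by
    intro j
    rw [Finset.sum_eq_sum_sdiff_singleton_add (Finset.mem_univ z) (fun l => c' l * A1 l j),
      hc'z, zero_mul, add_zero]
    rw [Finset.sum_subtype (p := fun l => l ≠ z) _ (by simp) (fun l => c' l * A1 l j)]
    refine Finset.sum_congr rfl fun x _ => ?_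
    simp [c', dif_neg x.2]
  have hv : ∀ (j : Fin n) (hj : j ∈ M), ∑ l, c' l * A1 l j = v ⟨j, hj⟩ := by
    intro j hj
    rw [hsum j]
    have h4 := congrArg (EuclideanSpace.proj (⟨j, hj⟩ : {x // x ∈ M})) hc
    simp only [map_sum, map_smul, PiLp.proj_apply, smul_eq_mul] at h4
    exact h4
  refine ⟨E * G1, (isUnit_iff_exists.mpr ⟨1 + N, h1, h2⟩).mul hG1u, ?_, ?_, ?_⟩
  · rw [Matrix.mul_assoc, ← hA1, hEA, if_pos rfl, hcolh z, Pi.single_eq_same]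
    have : ∀ l, c' l * A1 l h = if l = z then 0 else 0 := by
      intro l
      rcases eq_or_ne l z with rfl | hl
      · simp [hc'z]
      · rw [hcolh l, Pi.single_eq_of_ne hl, mul_zero, if_neg hl]
    rw [Finset.sum_congr rfl fun l _ => this l]
    simp
  · intro i hi
    rw [Matrix.mul_assoc, ← hA1, hEA, if_neg hi, sub_zero, hcolh i, Pi.single_eq_of_ne hi]
  · intro i hi
    have hri : r i ∈ V := Submodule.subset_span ⟨⟨i, hi⟩, rfl⟩
    have horth := V.starProjection_inner_eq_zero u (r i) hri
    rw [PiLp.inner_apply] at horth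
    simp only [RCLike.inner_apply, starRingEnd_apply, star_trivial] at horth
    rw [Matrix.mul_assoc, ← hA1]
    have key : ∀ (j : Fin n) (hj : j ∈ M),
        (E * A1) i j * (E * A1) z j = r i ⟨j, hj⟩ * (u - v) ⟨j, hj⟩ := by
      intro j hj
      rw [hEA, hEA, if_neg hi, if_pos rfl, sub_zero, hv j hj]
      rfl
    calc ∑ j ∈ M, (E * A1) i j * (E * A1) z j
        = ∑ x ∈ M.attach, (E * A1) i x.1 * (E * A1) z x.1 :=
          (Finset.sum_attach M _).symm
      _ = ∑ x ∈ M.attach, r i x * (u - v) x :=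
          Finset.sum_congr rfl fun x _ => key x.1 x.2
      _ = ∑ x : {x // x ∈ M}, r i x * (u - v) x := by rw [Finset.univ_eq_attach]
      _ = 0 := by
          rw [← horth]
          exact Finset.sum_congr rfl fun x _ => rfl
end

section
/- There exist universal constants c₀ ∈ (0,1) and K > 0 such that the following holds. Let α ∈ (0,1) and c ∈ (0, c₀], set a = 1 − 10α/c and b = 1 + α + 10α/c, and let ν be the trapezoid density with parameters (a, α, b). Let Ψ : ℝ → [−1,1] be measurable, and let x ∈ [0, α] be such that ∫_{a+x}^{1−x} Ψ(w) dw ≤ −0.1·(1−a) and ∫_{1+α+x}^{b−x} Ψ(w) dw ≥ 0.1·(b−(1+α)). Then ∫_{a+x}^{b+x} Ψ(w)·ν(w−x) dw − ∫_{a−x}^{b−x} Ψ(w)·ν(w+x) dw ≥ K·c·x/α. -/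
open MeasureTheory

/-- The trapezoid density with parameters `(a, α, b)` (where `a < 1 < 1+α < b`):
`C·(w−a)/(1−a)` on `[a,1]`, `C` on `(1, 1+α)`, `C·(b−w)/(b−1−α)` on `[1+α, b]`,
`0` outside `[a,b]`, with `C = 2/(b−a+α)`. -/
noncomputable def trapPdf (a α b w : ℝ) : ℝ :=
  if w < a then 0
  else if w ≤ 1 then (2 / (b - a + α)) * (w - a) / (1 - a)
  else if w < 1 + α then 2 / (b - a + α)
  else if w ≤ b then (2 / (b - a + α)) * (b - w) / (b - 1 - α)
  else 0

lemma trap_zero_left {a α b w : ℝ} (ha : a < 1) (h : w ≤ a) : trapPdf a α b w = 0 := by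
  unfold trapPdf
  rcases lt_or_eq_of_le h with h' | h'
  · rw [if_pos h']
  · subst h'
    rw [if_neg (lt_irrefl w), if_pos ha.le]
    simp

lemma trap_zero_right {a α b w : ℝ} (hα : 0 < α) (hb : 1 + α < b) (h : b ≤ w) :
    trapPdf a α b w = 0 := by
  unfold trapPdf
  split_ifs with h1 h2 h3 h4
  · rfl
  · exfalso; linarith
  · exfalso; linarith
  · have : w = b := le_antisymm h4 h
    rw [this]; simp
  · rfl

lemma trap_ramp {a α b w : ℝ} (h1 : a ≤ w) (h2 : w ≤ 1) :
    trapPdf a α b w = 2 / (b - a + α) * (w - a) / (1 - a) := by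
  unfold trapPdf
  rw [if_neg (not_lt.2 h1), if_pos h2]

lemma trap_fall {a α b w : ℝ} (ha : a < 1) (hα : 0 < α) (hw1 : 1 + α ≤ w) (hw2 : w ≤ b) :
    trapPdf a α b w = 2 / (b - a + α) * (b - w) / (b - 1 - α) := by
  unfold trapPdf
  rw [if_neg (show ¬ w < a by push_neg; linarith),
    if_neg (show ¬ w ≤ 1 by push_neg; linarith),
    if_neg (not_lt.2 hw1), if_pos hw2]

lemma trap_eq_clamp {a α b : ℝ} (ha : a < 1) (hα : 0 < α) (hb : 1 + α < b) (w : ℝ) :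
    trapPdf a α b w =
      (2 / (b - a + α)) * max 0 (min ((w - a) / (1 - a)) (min 1 ((b - w) / (b - 1 - α)))) := by
  have h1 : (0:ℝ) < 1 - a := by linarith
  have h2 : (0:ℝ) < b - 1 - α := by linarith
  unfold trapPdf
  split_ifs with h3 h4 h5 h6
  · have hp : (w - a) / (1 - a) < 0 := div_neg_of_neg_of_pos (by linarith) h1
    have : max 0 (min ((w - a) / (1 - a)) (min 1 ((b - w) / (b - 1 - α)))) = 0 :=
      max_eq_left ((min_le_left _ _).trans hp.le)
    rw [this, mul_zero]
  · -- a ≤ w ≤ 1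
    have hq : (1:ℝ) ≤ (b - w) / (b - 1 - α) := by
      rw [le_div_iff₀ h2]; linarith
    have hp1 : (w - a) / (1 - a) ≤ 1 := by rw [div_le_one h1]; linarith
    have hp0 : 0 ≤ (w - a) / (1 - a) := div_nonneg (by push_neg at h3; linarith) h1.le
    rw [min_eq_left hq, min_eq_left hp1, max_eq_right hp0, mul_div_assoc]
  · -- 1 < w < 1 + α
    have hq : (1:ℝ) ≤ (b - w) / (b - 1 - α) := by
      rw [le_div_iff₀ h2]; linarith
    have hp1 : (1:ℝ) ≤ (w - a) / (1 - a) := by rw [le_div_iff₀ h1]; linarith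
    rw [min_eq_left hq, min_eq_right hp1, max_eq_right zero_le_one, mul_one]
  · -- 1 + α ≤ w ≤ b
    push_neg at h5
    have hq1 : (b - w) / (b - 1 - α) ≤ 1 := by rw [div_le_one h2]; linarith
    have hq0 : 0 ≤ (b - w) / (b - 1 - α) := div_nonneg (by linarith) h2.le
    have hp : (b - w) / (b - 1 - α) ≤ (w - a) / (1 - a) := by
      have : (1:ℝ) ≤ (w - a) / (1 - a) := by rw [le_div_iff₀ h1]; linarith
      linarith
    rw [min_eq_right hq1, min_eq_right hp, max_eq_right hq0, mul_div_assoc]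
  · -- w > b
    push_neg at h6
    have hq : (b - w) / (b - 1 - α) < 0 := div_neg_of_neg_of_pos (by linarith) h2
    have : max 0 (min ((w - a) / (1 - a)) (min 1 ((b - w) / (b - 1 - α)))) = 0 :=
      max_eq_left ((min_le_right _ _).trans ((min_le_right _ _).trans hq.le))
    rw [this, mul_zero]

lemma trap_bound {a α b : ℝ} (ha : a < 1) (hα : 0 < α) (hb : 1 + α < b) (w : ℝ) :
    |trapPdf a α b w| ≤ 2 / (b - a + α) := by
  have hden : (0:ℝ) < b - a + α := by linarith
  have hC : (0:ℝ) ≤ 2 / (b - a + α) := by positivity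
  rw [trap_eq_clamp ha hα hb]
  have hm0 : (0:ℝ) ≤ max 0 (min ((w - a) / (1 - a)) (min 1 ((b - w) / (b - 1 - α)))) :=
    le_max_left _ _
  have hm1 : max 0 (min ((w - a) / (1 - a)) (min 1 ((b - w) / (b - 1 - α)))) ≤ 1 :=
    max_le zero_le_one ((min_le_right _ _).trans (min_le_left _ _))
  rw [abs_mul, abs_of_nonneg hC, abs_of_nonneg hm0]
  nlinarith

lemma trap_lip {a α b : ℝ} (ha : a < 1) (hα : 0 < α) (hb : 1 + α < b)
    (hL : b - 1 - α = 1 - a) (w₁ w₂ : ℝ) :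
    |trapPdf a α b w₁ - trapPdf a α b w₂| ≤ 2 / (b - a + α) / (1 - a) * |w₁ - w₂| := by
  have h1a : (0:ℝ) < 1 - a := by linarith
  have hden : (0:ℝ) < b - a + α := by linarith
  have hC : (0:ℝ) ≤ 2 / (b - a + α) := by positivity
  rw [trap_eq_clamp ha hα hb, trap_eq_clamp ha hα hb, ← mul_sub, abs_mul, abs_of_nonneg hC]
  have e1 : |(w₁ - a) / (1 - a) - (w₂ - a) / (1 - a)| = |w₁ - w₂| / (1 - a) := by
    rw [div_sub_div_same, show w₁ - a - (w₂ - a) = w₁ - w₂ by ring, abs_div, abs_of_pos h1a]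
  have e2 : |(b - w₁) / (b - 1 - α) - (b - w₂) / (b - 1 - α)| = |w₁ - w₂| / (1 - a) := by
    rw [div_sub_div_same, show b - w₁ - (b - w₂) = -(w₁ - w₂) by ring, abs_div, abs_neg, hL,
      abs_of_pos h1a]
  have key : |max 0 (min ((w₁ - a) / (1 - a)) (min 1 ((b - w₁) / (b - 1 - α)))) -
      max 0 (min ((w₂ - a) / (1 - a)) (min 1 ((b - w₂) / (b - 1 - α))))| ≤
      |w₁ - w₂| / (1 - a) := by
    refine (abs_max_sub_max_le_max _ _ _ _).trans ?_
    refine max_le (by simp; positivity) ?_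
    refine (abs_min_sub_min_le_max _ _ _ _).trans ?_
    refine max_le (le_of_eq e1) ?_
    refine (abs_min_sub_min_le_max _ _ _ _).trans ?_
    refine max_le (by simp; positivity) (le_of_eq e2)
  calc 2 / (b - a + α) * |max 0 _ - max 0 _| ≤ 2 / (b - a + α) * (|w₁ - w₂| / (1 - a)) :=
        mul_le_mul_of_nonneg_left key hC
    _ = 2 / (b - a + α) / (1 - a) * |w₁ - w₂| := by ring

lemma trap_cont {a α b : ℝ} (ha : a < 1) (hα : 0 < α) (hb : 1 + α < b) :
    Continuous (trapPdf a α b) := by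
  have : trapPdf a α b = fun w =>
      (2 / (b - a + α)) * max 0 (min ((w - a) / (1 - a)) (min 1 ((b - w) / (b - 1 - α)))) :=
    funext (trap_eq_clamp ha hα hb)
  rw [this]
  fun_prop

lemma trap_intInt {a α b : ℝ} (ha : a < 1) (hα : 0 < α) (hb : 1 + α < b)
    {Ψ : ℝ → ℝ} (hΨm : Measurable Ψ) (hΨb : ∀ y, Ψ y ∈ Set.Icc (-1:ℝ) 1) (t u v : ℝ) :
    IntervalIntegrable (fun w => Ψ w * trapPdf a α b (w + t)) volume u v := by
  have hm : Measurable fun w => Ψ w * trapPdf a α b (w + t) :=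
    hΨm.mul ((trap_cont ha hα hb).measurable.comp (measurable_id.add_const t))
  rw [intervalIntegrable_iff]
  haveI : Fact (volume (Set.uIoc u v) < ⊤) := ⟨measure_Ioc_lt_top⟩
  refine (integrable_const (2 / (b - a + α))).mono' hm.aestronglyMeasurable ?_
  filter_upwards with w
  rw [Real.norm_eq_abs, abs_mul]
  have h1 : |Ψ w| ≤ 1 := abs_le.2 ⟨(hΨb w).1, (hΨb w).2⟩
  have h2 := trap_bound ha hα hb (w + t)
  nlinarith [abs_nonneg (Ψ w), abs_nonneg (trapPdf a α b (w + t))]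

lemma trap_intInt' {a α b : ℝ} (ha : a < 1) (hα : 0 < α) (hb : 1 + α < b)
    {Ψ : ℝ → ℝ} (hΨm : Measurable Ψ) (hΨb : ∀ y, Ψ y ∈ Set.Icc (-1:ℝ) 1) (t u v : ℝ) :
    IntervalIntegrable (fun w => Ψ w * trapPdf a α b (w - t)) volume u v := by
  simpa [sub_eq_add_neg] using trap_intInt ha hα hb hΨm hΨb (-t) u v

set_option maxHeartbeats 1600000 in
/-- Per-deviation gain bound: there exist universal constants `c₀ ∈ (0,1)` and `K > 0`
such that for `α ∈ (0,1)`, `c ∈ (0,c₀]`, `a = 1−10α/c`, `b = 1+α+10α/c`, any measurable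
`Ψ : ℝ → [−1,1]` and any `x ∈ [0,α]` with `∫_{a+x}^{1−x} Ψ ≤ −0.1(1−a)` and
`∫_{1+α+x}^{b−x} Ψ ≥ 0.1(b−(1+α))`, the shifted-density difference satisfies
`∫_{a+x}^{b+x} Ψ(w)ν(w−x) dw − ∫_{a−x}^{b−x} Ψ(w)ν(w+x) dw ≥ K·c·x/α`. -/
theorem per_deviation_gain :
    ∃ c₀ K : ℝ, c₀ ∈ Set.Ioo (0 : ℝ) 1 ∧ 0 < K ∧
      ∀ (α c : ℝ), α ∈ Set.Ioo (0 : ℝ) 1 → c ∈ Set.Ioc (0 : ℝ) c₀ →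
        ∀ Ψ : ℝ → ℝ, Measurable Ψ → (∀ y, Ψ y ∈ Set.Icc (-1 : ℝ) 1) →
        ∀ x ∈ Set.Icc (0 : ℝ) α,
          (∫ w in (1 - 10 * α / c + x)..(1 - x), Ψ w) ≤ -0.1 * (1 - (1 - 10 * α / c)) →
          0.1 * ((1 + α + 10 * α / c) - (1 + α)) ≤
            (∫ w in (1 + α + x)..(1 + α + 10 * α / c - x), Ψ w) →
          (∫ w in (1 - 10 * α / c + x)..(1 + α + 10 * α / c + x),
              Ψ w * trapPdf (1 - 10 * α / c) α (1 + α + 10 * α / c) (w - x)) -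
            (∫ w in (1 - 10 * α / c - x)..(1 + α + 10 * α / c - x),
              Ψ w * trapPdf (1 - 10 * α / c) α (1 + α + 10 * α / c) (w + x))
            ≥ K * c * x / α := by
  refine ⟨1/10, 1/100, ⟨by norm_num, by norm_num⟩, by norm_num, ?_⟩
  rintro α c ⟨hα0, hα1⟩ ⟨hc0, hc1⟩ Ψ hΨm hΨb x ⟨hx0, hxα⟩ h1 h2
  set L : ℝ := 10 * α / c with hLdef
  set a : ℝ := 1 - L with hadef
  set b : ℝ := 1 + α + L with hbdef
  have hL0 : 0 < L := by rw [hLdef]; positivity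
  have hLge : 100 * α ≤ L := by
    rw [hLdef, le_div_iff₀ hc0]; nlinarith
  have h1a : 1 - a = L := by rw [hadef]; ring
  have ha1 : a < 1 := by simp only [hadef]; linarith
  have hbα : 1 + α < b := by simp only [hbdef]; linarith
  have hbL : b - 1 - α = 1 - a := by simp only [hadef, hbdef]; ring
  have hb1α : b - (1 + α) = L := by simp only [hbdef]; ring
  have hbaα : b - a + α = 2*L + 2*α := by simp only [hadef, hbdef]; ring
  have hden : 0 < b - a + α := by rw [hbaα]; linarith
  -- orderings
  have e0 : a - x ≤ a + x := by linarith
  have e1 : a + x ≤ 1 - x := by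
    have : a = 1 - L := hadef
    linarith
  have e2 : (1:ℝ) - x ≤ 1 + α + x := by linarith
  have e3 : 1 + α + x ≤ b - x := by
    have : b = 1 + α + L := hbdef
    linarith
  have e4 : b - x ≤ b + x := by linarith
  rw [h1a] at h1
  rw [hb1α] at h2
  -- integrability
  have hf : ∀ u v : ℝ, IntervalIntegrable (fun w => Ψ w * trapPdf a α b (w - x)) volume u v :=
    fun u v => trap_intInt' ha1 hα0 hbα hΨm hΨb x u v
  have hg : ∀ u v : ℝ, IntervalIntegrable (fun w => Ψ w * trapPdf a α b (w + x)) volume u v :=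
    fun u v => trap_intInt ha1 hα0 hbα hΨm hΨb x u v
  have hF : ∀ u v : ℝ, IntervalIntegrable
      (fun w => Ψ w * trapPdf a α b (w - x) - Ψ w * trapPdf a α b (w + x)) volume u v :=
    fun u v => (hf u v).sub (hg u v)
  -- zero pieces
  have hz1 : (∫ w in (a-x)..(a+x), Ψ w * trapPdf a α b (w - x)) = 0 := by
    have hEq : Set.EqOn (fun w => Ψ w * trapPdf a α b (w - x)) (fun _ => (0:ℝ))
        (Set.uIcc (a-x) (a+x)) := by
      intro w hw
      rw [Set.uIcc_of_le e0] at hw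
      have : trapPdf a α b (w - x) = 0 := trap_zero_left ha1 (by linarith [hw.2])
      simp [this]
    rw [intervalIntegral.integral_congr hEq]
    simp
  have hz2 : (∫ w in (b-x)..(b+x), Ψ w * trapPdf a α b (w + x)) = 0 := by
    have hEq : Set.EqOn (fun w => Ψ w * trapPdf a α b (w + x)) (fun _ => (0:ℝ))
        (Set.uIcc (b-x) (b+x)) := by
      intro w hw
      rw [Set.uIcc_of_le e4] at hw
      have : trapPdf a α b (w + x) = 0 := trap_zero_right hα0 hbα (by linarith [hw.1])
      simp [this]
    rw [intervalIntegral.integral_congr hEq]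
    simp
  have hA : (∫ w in (a+x)..(b+x), Ψ w * trapPdf a α b (w - x))
      = ∫ w in (a-x)..(b+x), Ψ w * trapPdf a α b (w - x) := by
    rw [← intervalIntegral.integral_add_adjacent_intervals (hf (a-x) (a+x)) (hf (a+x) (b+x)),
      hz1, zero_add]
  have hB : (∫ w in (a-x)..(b-x), Ψ w * trapPdf a α b (w + x))
      = ∫ w in (a-x)..(b+x), Ψ w * trapPdf a α b (w + x) := by
    rw [← intervalIntegral.integral_add_adjacent_intervals (hg (a-x) (b-x)) (hg (b-x) (b+x)),
      hz2, add_zero]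
  have hD : (∫ w in (a+x)..(b+x), Ψ w * trapPdf a α b (w - x))
      - (∫ w in (a-x)..(b-x), Ψ w * trapPdf a α b (w + x))
      = ∫ w in (a-x)..(b+x),
          (Ψ w * trapPdf a α b (w - x) - Ψ w * trapPdf a α b (w + x)) := by
    rw [hA, hB]
    exact (intervalIntegral.integral_sub (hf _ _) (hg _ _)).symm
  -- splitting
  have s1 := intervalIntegral.integral_add_adjacent_intervals (hF (a-x) (a+x)) (hF (a+x) (b+x))
  have s2 := intervalIntegral.integral_add_adjacent_intervals (hF (a+x) (1-x)) (hF (1-x) (b+x))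
  have s3 := intervalIntegral.integral_add_adjacent_intervals
    (hF (1-x) (1+α+x)) (hF (1+α+x) (b+x))
  have s4 := intervalIntegral.integral_add_adjacent_intervals
    (hF (1+α+x) (b-x)) (hF (b-x) (b+x))
  -- pointwise bound
  have hMw : ∀ w : ℝ, ‖Ψ w * trapPdf a α b (w - x) - Ψ w * trapPdf a α b (w + x)‖ ≤
      2 / (b - a + α) / (1 - a) * (2*x) := by
    intro w
    rw [Real.norm_eq_abs, ← mul_sub, abs_mul]
    have hlip := trap_lip ha1 hα0 hbα hbL (w - x) (w + x)
    have habs : |w - x - (w + x)| = 2*x := by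
      rw [show w - x - (w + x) = -(2*x) by ring, abs_neg, abs_of_nonneg (by linarith)]
    rw [habs] at hlip
    have hΨ1 : |Ψ w| ≤ 1 := abs_le.2 ⟨(hΨb w).1, (hΨb w).2⟩
    have hnn : (0:ℝ) ≤ 2 / (b - a + α) / (1 - a) * (2*x) :=
      mul_nonneg (div_nonneg (div_nonneg (by norm_num) hden.le) (by linarith)) (by linarith)
    nlinarith [abs_nonneg (trapPdf a α b (w - x) - trapPdf a α b (w + x)), abs_nonneg (Ψ w)]
  -- error bounds
  have hI1 : -(2 / (b - a + α) / (1 - a) * (2*x) * (2*x)) ≤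
      ∫ w in (a-x)..(a+x), (Ψ w * trapPdf a α b (w - x) - Ψ w * trapPdf a α b (w + x)) := by
    have hb1 := intervalIntegral.norm_integral_le_of_norm_le_const (fun w _ => hMw w)
      (a := a-x) (b := a+x)
    rw [show a + x - (a - x) = 2*x by ring, abs_of_nonneg (by linarith : (0:ℝ) ≤ 2*x),
      Real.norm_eq_abs] at hb1
    linarith [(abs_le.1 hb1).1]
  have hI3 : -(2 / (b - a + α) / (1 - a) * (2*x) * (α + 2*x)) ≤
      ∫ w in (1-x)..(1+α+x), (Ψ w * trapPdf a α b (w - x) - Ψ w * trapPdf a α b (w + x)) := by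
    have hb1 := intervalIntegral.norm_integral_le_of_norm_le_const (fun w _ => hMw w)
      (a := 1-x) (b := 1+α+x)
    rw [show 1 + α + x - (1 - x) = α + 2*x by ring,
      abs_of_nonneg (by linarith : (0:ℝ) ≤ α + 2*x), Real.norm_eq_abs] at hb1
    linarith [(abs_le.1 hb1).1]
  have hI5 : -(2 / (b - a + α) / (1 - a) * (2*x) * (2*x)) ≤
      ∫ w in (b-x)..(b+x), (Ψ w * trapPdf a α b (w - x) - Ψ w * trapPdf a α b (w + x)) := by
    have hb1 := intervalIntegral.norm_integral_le_of_norm_le_const (fun w _ => hMw w)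
      (a := b-x) (b := b+x)
    rw [show b + x - (b - x) = 2*x by ring, abs_of_nonneg (by linarith : (0:ℝ) ≤ 2*x),
      Real.norm_eq_abs] at hb1
    linarith [(abs_le.1 hb1).1]
  -- good interval 2
  have hI2eq : (∫ w in (a+x)..(1-x),
        (Ψ w * trapPdf a α b (w - x) - Ψ w * trapPdf a α b (w + x)))
      = (∫ w in (a+x)..(1-x), Ψ w) * (-(2 / (b - a + α) * (2*x) / (1 - a))) := by
    rw [← intervalIntegral.integral_mul_const]
    apply intervalIntegral.integral_congr
    intro w hw
    rw [Set.uIcc_of_le e1] at hw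
    obtain ⟨hw1, hw2⟩ := hw
    simp only
    rw [trap_ramp (by linarith) (by linarith), trap_ramp (by linarith) (by linarith)]
    ring
  have hI2 : 0.4 * x / (b - a + α) ≤ ∫ w in (a+x)..(1-x),
      (Ψ w * trapPdf a α b (w - x) - Ψ w * trapPdf a α b (w + x)) := by
    rw [hI2eq]
    have hm : -(2 / (b - a + α) * (2*x) / (1 - a)) ≤ 0 := by
      have : (0:ℝ) ≤ 2 / (b - a + α) * (2*x) / (1 - a) :=
        div_nonneg (mul_nonneg (div_nonneg (by norm_num) hden.le) (by linarith)) (by linarith)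
      linarith
    have hmul := mul_le_mul_of_nonpos_right h1 hm
    have heq : (-0.1 * L) * (-(2 / (b - a + α) * (2*x) / (1 - a))) = 0.4 * x / (b - a + α) := by
      rw [h1a.symm] at hL0 ⊢
      field_simp
      ring
    linarith
  -- good interval 4
  have hI4eq : (∫ w in (1+α+x)..(b-x),
        (Ψ w * trapPdf a α b (w - x) - Ψ w * trapPdf a α b (w + x)))
      = (∫ w in (1+α+x)..(b-x), Ψ w) * (2 / (b - a + α) * (2*x) / (1 - a)) := by
    rw [← intervalIntegral.integral_mul_const]
    apply intervalIntegral.integral_congr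
    intro w hw
    rw [Set.uIcc_of_le e3] at hw
    obtain ⟨hw1, hw2⟩ := hw
    simp only
    rw [trap_fall ha1 hα0 (by linarith) (by linarith),
      trap_fall ha1 hα0 (by linarith) (by linarith), hbL]
    ring
  have hI4 : 0.4 * x / (b - a + α) ≤ ∫ w in (1+α+x)..(b-x),
      (Ψ w * trapPdf a α b (w - x) - Ψ w * trapPdf a α b (w + x)) := by
    rw [hI4eq]
    have hm : (0:ℝ) ≤ 2 / (b - a + α) * (2*x) / (1 - a) :=
      div_nonneg (mul_nonneg (div_nonneg (by norm_num) hden.le) (by linarith)) (by linarith)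
    have hmul := mul_le_mul_of_nonneg_right h2 hm
    have heq : (0.1 * L) * (2 / (b - a + α) * (2*x) / (1 - a)) = 0.4 * x / (b - a + α) := by
      rw [h1a.symm] at hL0 ⊢
      field_simp
      ring
    linarith
  -- final numeric inequality
  have hcL : c * L = 10 * α := by
    rw [hLdef]; field_simp
  have hfin : 1/100 * c * x / α ≤
      0.4 * x / (b - a + α) + 0.4 * x / (b - a + α)
      - 2 / (b - a + α) / (1 - a) * (2*x) * (2*x)
      - 2 / (b - a + α) / (1 - a) * (2*x) * (α + 2*x)
      - 2 / (b - a + α) / (1 - a) * (2*x) * (2*x) := by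
    rw [hbaα, h1a]
    have hE : 0.4 * x / (2*L + 2*α) + 0.4 * x / (2*L + 2*α)
        - 2 / (2*L + 2*α) / L * (2*x) * (2*x)
        - 2 / (2*L + 2*α) / L * (2*x) * (α + 2*x)
        - 2 / (2*L + 2*α) / L * (2*x) * (2*x)
        = (0.8 * x * L - 4 * x * (α + 6*x)) / (L * (2*L + 2*α)) := by
      field_simp
      ring
    rw [hE, div_le_div_iff₀ (by positivity) (by positivity)]
    have hkey : c * x * (L * (2*L + 2*α)) = 10 * α * x * (2*L + 2*α) := by
      linear_combination (x * (2*L + 2*α)) * hcL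
    nlinarith [mul_nonneg (mul_nonneg hx0 hα0.le) (by linarith : (0:ℝ) ≤ L - 100*α),
      mul_nonneg (mul_nonneg hx0 hα0.le) (by linarith : (0:ℝ) ≤ α - x),
      mul_nonneg hx0 hα0.le]
  rw [ge_iff_le, hD]
  linarith [hI1, hI2, hI3, hI4, hI5, s1, s2, s3, s4, hfin]
end
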